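/- Suppose F : ℝ × ℝ^{m×n} → ℝ^{m×n} is bounded by B and Lipschitz continuous in its second argument with constant L (with respect to the Frobenius norm). Let K(t) solve K̇(t) = F(t, K(t)V₀ᵀ)V₀ with K(t₀) = U₀S₀, and let Ŝ(t) solve Ŝ'(t) = Ûᵀ F(t, Û Ŝ(t) V̂ᵀ) V̂ with Û = (U₀, Ũ₁), V̂ = (V₀, Ṽ₁), Ŝ(t₀) = block-diag(S₀, 0), where all of U₀, Ũ₁, V₀, Ṽ₁ have orthonormal columns, Ũ₁ᵀU₀ = 0, Ṽ₁ᵀV₀ = 0. Then for h = t₁ − t₀, the lower-left block of Ŝ(t₁) satisfies ‖(Ŝ(t₁))_{(1,0)} − Ũ₁ᵀ K(t₁)‖_F ≤ C h², where the constant C depends only on B and L. -/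

import Mathlib

open Matrix

attribute [local instance] Matrix.frobeniusSeminormedAddCommGroup Matrix.frobeniusNormedAddCommGroup Matrix.frobeniusNormedSpace

/-- Frobenius norm. -/
noncomputable def frob {m n : ℕ} (A : Matrix (Fin m) (Fin n) ℝ) : ℝ :=
  Real.sqrt (∑ i, ∑ j, (A i j) ^ 2)

section AuxLemmas
lemma frob_eq_norm {m n : ℕ} (A : Matrix (Fin m) (Fin n) ℝ) : frob A = ‖A‖ := by
  rw [frob, frobenius_norm_def, Real.sqrt_eq_rpow]
  congr 1
  refine Finset.sum_congr rfl fun i _ => Finset.sum_congr rfl fun j _ => ?_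
  rw [Real.norm_eq_abs, Real.rpow_two, sq_abs]

variable {m n p q : Type*} [Fintype m] [Fintype n] [Fintype p] [Fintype q] [DecidableEq m] [DecidableEq n]

omit [DecidableEq m] [DecidableEq n] in
lemma norm_sq_eq (A : Matrix m n ℝ) : ‖A‖ ^ 2 = (Aᵀ * A).trace := by
  have h : (Aᵀ * A).trace = ∑ i, ∑ j, A i j ^ 2 := by
    simp only [Matrix.trace, Matrix.mul_apply, Matrix.diag, Matrix.transpose_apply, sq,
      Finset.sum_comm (γ := n)]
  rw [h, frobenius_norm_def, ← Real.rpow_natCast _ 2, ← Real.rpow_mul (by positivity)]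
  norm_num

omit [DecidableEq m] [DecidableEq n] in
lemma trace_tr_nonneg (A : Matrix m n ℝ) : 0 ≤ (Aᵀ * A).trace := by
  rw [← norm_sq_eq]; positivity

lemma norm_orth_mul (M : Matrix m n ℝ) (A : Matrix n p ℝ) (h : Mᵀ * M = 1) :
    ‖M * A‖ = ‖A‖ := by
  have h2 : ‖M * A‖ ^ 2 = ‖A‖ ^ 2 := by
    rw [norm_sq_eq, norm_sq_eq, Matrix.transpose_mul, Matrix.mul_assoc,
      ← Matrix.mul_assoc Mᵀ, h, Matrix.one_mul]
  rw [← Real.sqrt_sq (norm_nonneg (M * A)), ← Real.sqrt_sq (norm_nonneg A), h2]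

lemma norm_mul_orth_t (A : Matrix p n ℝ) (M : Matrix m n ℝ) (h : Mᵀ * M = 1) :
    ‖A * Mᵀ‖ = ‖A‖ := by
  rw [← frobenius_norm_transpose, Matrix.transpose_mul, Matrix.transpose_transpose,
    norm_orth_mul _ _ h, frobenius_norm_transpose]

lemma norm_orth_t_mul_le (M : Matrix m n ℝ) (A : Matrix m p ℝ) (h : Mᵀ * M = 1) :
    ‖Mᵀ * A‖ ≤ ‖A‖ := by
  have key : ‖A‖ ^ 2 - ‖Mᵀ * A‖ ^ 2 = ((A - M * (Mᵀ * A))ᵀ * (A - M * (Mᵀ * A))).trace := by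
    have expand : (A - M * (Mᵀ * A))ᵀ * (A - M * (Mᵀ * A)) =
        Aᵀ * A - (Mᵀ * A)ᵀ * (Mᵀ * A) := by
      simp only [Matrix.transpose_sub, Matrix.transpose_mul, Matrix.sub_mul, Matrix.mul_sub,
        Matrix.mul_assoc]
      rw [show Mᵀ * (M * (Mᵀ * A)) = Mᵀ * A by rw [← Matrix.mul_assoc, h, Matrix.one_mul]]
      abel
    rw [expand, Matrix.trace_sub, norm_sq_eq, norm_sq_eq]
  have h1 := trace_tr_nonneg (A - M * (Mᵀ * A))
  nlinarith [norm_nonneg (Mᵀ * A), norm_nonneg A]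

lemma norm_mul_orth_le (A : Matrix p m ℝ) (M : Matrix m n ℝ) (h : Mᵀ * M = 1) :
    ‖A * M‖ ≤ ‖A‖ := by
  rw [← frobenius_norm_transpose, Matrix.transpose_mul, ← frobenius_norm_transpose A]
  exact norm_orth_t_mul_le _ _ h

omit [DecidableEq m] [DecidableEq n] in
lemma hasDerivAt_matmul {α β : Type*} [Fintype α] [Fintype β]
    (P : Matrix m α ℝ) (Q : Matrix β n ℝ) {f : ℝ → Matrix α β ℝ} {f' : Matrix α β ℝ} {t : ℝ}
    (hf : HasDerivAt f f' t) :
    HasDerivAt (fun s => P * f s * Q) (P * f' * Q) t := by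
  let e : Matrix α β ℝ →ₗ[ℝ] Matrix m n ℝ :=
    { toFun := fun A => P * A * Q
      map_add' := fun A B' => by simp [Matrix.mul_add, Matrix.add_mul]
      map_smul' := fun c A => by
        simp [Matrix.mul_smul, Matrix.smul_mul] }
  exact (e.toContinuousLinearMap.hasFDerivAt.comp_hasDerivAt t hf : _)

omit [DecidableEq m] [DecidableEq n] in
lemma hasDerivAt_matmul_left {α : Type*} [Fintype α]
    (P : Matrix m α ℝ) {f : ℝ → Matrix α n ℝ} {f' : Matrix α n ℝ} {t : ℝ}
    (hf : HasDerivAt f f' t) :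
    HasDerivAt (fun s => P * f s) (P * f') t := by
  let e : Matrix α n ℝ →ₗ[ℝ] Matrix m n ℝ :=
    { toFun := fun A => P * A
      map_add' := fun A B' => by simp [Matrix.mul_add]
      map_smul' := fun c A => by simp [Matrix.mul_smul] }
  exact (e.toContinuousLinearMap.hasFDerivAt.comp_hasDerivAt t hf : _)

end AuxLemmas

/-- The lower-left block of the augmented Galerkin coefficient matrix differs
from tU1ᵀ K(t₁) by O(h²), with a constant depending only on the bound B and
Lipschitz constant L of F. -/
theorem lower_left_block_discrepancy
    (B L : ℝ) :
    ∃ C : ℝ, 0 ≤ C ∧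
      ∀ (m n r : ℕ)
        (F : ℝ → Matrix (Fin m) (Fin n) ℝ → Matrix (Fin m) (Fin n) ℝ),
        (∀ t Y, frob (F t Y) ≤ B) →
        (∀ t Y Z, frob (F t Y - F t Z) ≤ L * frob (Y - Z)) →
        ∀ (U₀ tU1 : Matrix (Fin m) (Fin r) ℝ) (V₀ tV1 : Matrix (Fin n) (Fin r) ℝ),
        U₀ᵀ * U₀ = 1 → tU1ᵀ * tU1 = 1 → tU1ᵀ * U₀ = 0 →
        V₀ᵀ * V₀ = 1 → tV1ᵀ * tV1 = 1 → tV1ᵀ * V₀ = 0 →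
        ∀ (S₀ : Matrix (Fin r) (Fin r) ℝ)
          (K : ℝ → Matrix (Fin m) (Fin r) ℝ)
          (hS_mat : ℝ → Matrix (Fin r ⊕ Fin r) (Fin r ⊕ Fin r) ℝ)
          (t₀ t₁ : ℝ), t₀ ≤ t₁ →
        K t₀ = U₀ * S₀ →
        (∀ t ∈ Set.Icc t₀ t₁, HasDerivAt K (F t (K t * V₀ᵀ) * V₀) t) →
        hS_mat t₀ = Matrix.fromBlocks S₀ 0 0 0 →
        (∀ t ∈ Set.Icc t₀ t₁,
          HasDerivAt hS_mat
            ((Matrix.fromCols U₀ tU1)ᵀ *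
              F t (Matrix.fromCols U₀ tU1 * hS_mat t * (Matrix.fromCols V₀ tV1)ᵀ) *
              Matrix.fromCols V₀ tV1) t) →
        frob (tU1ᵀ * (Matrix.fromCols U₀ tU1 * hS_mat t₁ * (Matrix.fromCols V₀ tV1)ᵀ) * V₀
              - tU1ᵀ * K t₁)
          ≤ C * (t₁ - t₀) ^ 2 := by
  set c : ℝ := max L 0 * max B 0 with hc
  have hc0 : 0 ≤ c := mul_nonneg (le_max_right _ _) (le_max_right _ _)
  refine ⟨c, hc0, ?_⟩
  intro m n r F hB hLip U₀ tU1 V₀ tV1 hU0 htU1 htUU hV0 htV1 htVV S₀ K hS_mat t₀ t₁ ht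
    hK0 hKd hS0 hSd
  simp only [frob_eq_norm] at hB hLip ⊢
  -- basic facts
  have hB0 : 0 ≤ B := le_trans (norm_nonneg _) (hB 0 0)
  set Uh := Matrix.fromCols U₀ tU1 with hUh
  set Vh := Matrix.fromCols V₀ tV1 with hVh
  have hU0t : U₀ᵀ * tU1 = 0 := by
    have := congrArg Matrix.transpose htUU
    simpa [Matrix.transpose_mul] using this
  have hV0t : V₀ᵀ * tV1 = 0 := by
    have := congrArg Matrix.transpose htVV
    simpa [Matrix.transpose_mul] using this
  have hUo : Uhᵀ * Uh = 1 := by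
    rw [hUh, Matrix.transpose_fromCols, Matrix.fromRows_mul_fromCols,
      hU0, hU0t, htUU, htU1, Matrix.fromBlocks_one]
  have hVo : Vhᵀ * Vh = 1 := by
    rw [hVh, Matrix.transpose_fromCols, Matrix.fromRows_mul_fromCols,
      hV0, hV0t, htVV, htV1, Matrix.fromBlocks_one]
  -- projection identities
  have hUproj : tU1ᵀ * Uh * Uhᵀ = tU1ᵀ := by
    rw [hUh, Matrix.mul_fromCols, htUU, htU1, Matrix.transpose_fromCols,
      Matrix.fromCols_mul_fromRows]
    simp
  have hVproj : Vh * (Vhᵀ * V₀) = V₀ := by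
    rw [hVh, Matrix.transpose_fromCols, Matrix.fromRows_mul, hV0, htVV,
      Matrix.fromCols_mul_fromRows]
    simp
  -- the error functions
  set Yh : ℝ → Matrix (Fin m) (Fin n) ℝ := fun t => Uh * hS_mat t * Vhᵀ with hYh
  set G : ℝ → Matrix (Fin m) (Fin n) ℝ := fun t => Yh t - K t * V₀ᵀ with hG
  set X : ℝ → Matrix (Fin r) (Fin r) ℝ := fun t => tU1ᵀ * Yh t * V₀ - tU1ᵀ * K t with hX
  -- initial values
  have hYh0 : Yh t₀ = U₀ * S₀ * V₀ᵀ := by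
    rw [hYh]
    simp only [hS0, hUh, hVh, Matrix.fromCols_mul_fromBlocks, Matrix.mul_zero,
      add_zero, zero_add, Matrix.transpose_fromCols,
      Matrix.fromCols_mul_fromRows, Matrix.zero_mul]
  have hG0 : G t₀ = 0 := by
    rw [hG]
    simp only [hYh0, hK0, Matrix.mul_assoc, sub_self]
  have hX0 : X t₀ = 0 := by
    rw [hX]
    simp only [hYh0, hK0, ← Matrix.mul_assoc, htUU, Matrix.zero_mul]
    simp
  -- derivative of G
  have hGd : ∀ t ∈ Set.Icc t₀ t₁,
      HasDerivAt G (Uh * (Uhᵀ * F t (Yh t) * Vh) * Vhᵀ - F t (K t * V₀ᵀ) * V₀ * V₀ᵀ) t := by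
    intro t htt
    have h2 := hasDerivAt_matmul (1 : Matrix (Fin m) (Fin m) ℝ) V₀ᵀ (hKd t htt)
    simp only [Matrix.one_mul] at h2
    exact ((hasDerivAt_matmul Uh Vhᵀ (hSd t htt)).sub h2 : _)
  -- bound on derivative of G
  have hGdbound : ∀ t ∈ Set.Icc t₀ t₁,
      ‖Uh * (Uhᵀ * F t (Yh t) * Vh) * Vhᵀ - F t (K t * V₀ᵀ) * V₀ * V₀ᵀ‖ ≤ 2 * B := by
    intro t htt
    have h1 : ‖Uh * (Uhᵀ * F t (Yh t) * Vh) * Vhᵀ‖ ≤ B := by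
      rw [norm_mul_orth_t _ Vh hVo, norm_orth_mul Uh _ hUo]
      exact le_trans (norm_mul_orth_le _ Vh hVo)
        (le_trans (norm_orth_t_mul_le Uh _ hUo) (hB _ _))
    have h2 : ‖F t (K t * V₀ᵀ) * V₀ * V₀ᵀ‖ ≤ B := by
      rw [norm_mul_orth_t _ V₀ hV0]
      exact le_trans (norm_mul_orth_le _ V₀ hV0) (hB _ _)
    calc ‖Uh * (Uhᵀ * F t (Yh t) * Vh) * Vhᵀ - F t (K t * V₀ᵀ) * V₀ * V₀ᵀ‖
        ≤ ‖Uh * (Uhᵀ * F t (Yh t) * Vh) * Vhᵀ‖ + ‖F t (K t * V₀ᵀ) * V₀ * V₀ᵀ‖ := norm_sub_le _ _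
      _ ≤ 2 * B := by linarith
  -- bound on G
  have hGbound : ∀ t ∈ Set.Icc t₀ t₁, ‖G t‖ ≤ 2 * B * (t - t₀) := by
    intro t htt
    have := (convex_Icc t₀ t₁).norm_image_sub_le_of_norm_hasDerivWithin_le
      (f := G)
      (f' := fun s => Uh * (Uhᵀ * F s (Yh s) * Vh) * Vhᵀ - F s (K s * V₀ᵀ) * V₀ * V₀ᵀ)
      (fun s hs => (hGd s hs).hasDerivWithinAt) hGdbound
      (Set.left_mem_Icc.2 ht) htt
    rw [hG0, sub_zero, Real.norm_eq_abs, abs_of_nonneg (sub_nonneg.2 htt.1)] at this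
    exact this
  -- derivative of X
  have hXd : ∀ t ∈ Set.Icc t₀ t₁,
      HasDerivAt X (tU1ᵀ * (F t (Yh t) - F t (K t * V₀ᵀ)) * V₀) t := by
    intro t htt
    have h1 : HasDerivAt X
        (tU1ᵀ * (Uh * (Uhᵀ * F t (Yh t) * Vh) * Vhᵀ) * V₀ - tU1ᵀ * (F t (K t * V₀ᵀ) * V₀)) t :=
      (hasDerivAt_matmul tU1ᵀ V₀ (hasDerivAt_matmul Uh Vhᵀ (hSd t htt))).sub
        (hasDerivAt_matmul_left tU1ᵀ (hKd t htt))
    have key : tU1ᵀ * (Uh * (Uhᵀ * F t (Yh t) * Vh) * Vhᵀ) * V₀ = tU1ᵀ * F t (Yh t) * V₀ := by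
      simp only [Matrix.mul_assoc]
      rw [hVproj]
      simp only [← Matrix.mul_assoc]
      rw [hUproj]
    rw [key] at h1
    convert h1 using 1
    simp [Matrix.mul_sub, Matrix.sub_mul, Matrix.mul_assoc]
  -- bound on derivative of X
  have hXdbound : ∀ t ∈ Set.Icc t₀ t₁,
      ‖tU1ᵀ * (F t (Yh t) - F t (K t * V₀ᵀ)) * V₀‖ ≤ c * (2 * (t - t₀)) := by
    intro t htt
    have h1 : ‖tU1ᵀ * (F t (Yh t) - F t (K t * V₀ᵀ)) * V₀‖
        ≤ ‖F t (Yh t) - F t (K t * V₀ᵀ)‖ :=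
      le_trans (norm_mul_orth_le _ V₀ hV0) (norm_orth_t_mul_le tU1 _ htU1)
    have h2 := hLip t (Yh t) (K t * V₀ᵀ)
    have h4 := hGbound t htt
    have e1 : ‖F t (Yh t) - F t (K t * V₀ᵀ)‖ ≤ max L 0 * ‖G t‖ :=
      le_trans h2 (mul_le_mul_of_nonneg_right (le_max_left _ _) (norm_nonneg _))
    have e2 : max L 0 * ‖G t‖ ≤ max L 0 * (2 * B * (t - t₀)) :=
      mul_le_mul_of_nonneg_left h4 (le_max_right _ _)
    have e3 : max L 0 * (2 * B * (t - t₀)) ≤ max L 0 * (2 * max B 0 * (t - t₀)) := by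
      have : 2 * B * (t - t₀) ≤ 2 * max B 0 * (t - t₀) :=
        mul_le_mul_of_nonneg_right
          (by nlinarith [le_max_left B 0]) (sub_nonneg.2 htt.1)
      exact mul_le_mul_of_nonneg_left this (le_max_right _ _)
    have e4 : max L 0 * (2 * max B 0 * (t - t₀)) = c * (2 * (t - t₀)) := by
      rw [hc]; ring
    linarith
  -- boundary function derivative
  have hφ : ∀ x : ℝ, HasDerivAt (fun t => c * (t - t₀) ^ 2) (c * (2 * (x - t₀))) x := by
    intro x
    have h := (((hasDerivAt_id x).sub_const t₀).pow 2).const_mul c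
    convert h using 1
    · rfl
    · rfl
    · funext y; simp
    · simp
  have key := image_norm_le_of_norm_deriv_right_le_deriv_boundary
    (f := X) (a := t₀) (b := t₁)
    (f' := fun t => tU1ᵀ * (F t (Yh t) - F t (K t * V₀ᵀ)) * V₀)
    (fun s hs => (hXd s hs).continuousAt.continuousWithinAt)
    (fun s hs => (hXd s (Set.mem_Icc_of_Ico hs)).hasDerivWithinAt)
    (B := fun t => c * (t - t₀) ^ 2) (B' := fun x => c * (2 * (x - t₀)))
    (by simp [hX0]) hφ
    (fun s hs => hXdbound s (Set.mem_Icc_of_Ico hs))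
  exact key (Set.right_mem_Icc.2 ht)
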